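/- Let ψ : G →+ H be a surjective homomorphism of additive commutative groups, R a commutative ring with G-grading 𝒜, and M an R-module with a G-graded module structure ℳ : G → AddSubgroup M (so M is the internal direct sum of the ℳ g and 𝒜 g • ℳ g' ⊆ ℳ (g+g')). Then the ψ-coarsened family ℳ_[ψ] h = ⨆_{g ∈ ψ⁻¹(h)} ℳ g makes M an H-graded module over the ψ-coarsened ring grading: M is the internal direct sum of the ℳ_[ψ] h and (⨆_{g ∈ ψ⁻¹(h)} 𝒜 g) • ℳ_[ψ] h' ⊆ ℳ_[ψ] (h + h'). -/

import Mathlib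

/-!
Independence passes to suprema over the blocks of a partition of the index set: in a modular,
compactly generated lattice such as `Submodule ℤ M`, the supremum over one fibre of `ψ` is
disjoint from the supremum over its complement, which contains all the other fibres. The fibres
cover `G`, so the coarsened components still span `M`. Compatibility with scalars reduces,
by additivity of `•` in each argument, to the generators `𝒜 g` and `ℳ g'` of the coarsened
components, where it is the hypothesis together with `ψ (g + g') = ψ g + ψ g'`.
-/

/-- Coarsening of a grading along a surjective group homomorphism `ψ`:
the component of degree `h` is the supremum of the components of the degrees
in the fibre `ψ ⁻¹' {h}`. -/
def AddSubgroup.coarsen {G H M : Type*} [AddCommGroup G] [AddCommGroup H]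
    [AddCommGroup M] (ψ : G →+ H) (ℳ : G → AddSubgroup M) (h : H) : AddSubgroup M :=
  ⨆ g ∈ ψ ⁻¹' {h}, ℳ g

theorem iSup_biSup_preimage_singleton {α ι κ : Type*} [CompleteLattice α] (f : ι → α)
    (π : ι → κ) : ⨆ k, ⨆ i ∈ π ⁻¹' {k}, f i = ⨆ i, f i := by
  simp only [Set.mem_preimage, Set.mem_singleton_iff]
  rw [iSup_comm]
  exact iSup_congr fun i => iSup_iSup_eq_right

theorem iSupIndep.biSup_preimage_singleton {α ι κ : Type*} [CompleteLattice α]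
    [IsModularLattice α] [IsCompactlyGenerated α] {f : ι → α} (hf : iSupIndep f) (π : ι → κ) :
    iSupIndep fun k => ⨆ i ∈ π ⁻¹' {k}, f i := by
  intro k
  refine (hf.disjoint_biSup_biSup disjoint_compl_right).mono_right ?_
  refine iSup₂_le fun k' hk' => biSup_mono fun i hi => ?_
  simp only [Set.mem_compl_iff, Set.mem_preimage, Set.mem_singleton_iff] at hi ⊢
  exact hi ▸ hk'

theorem DirectSum.IsInternal.biSup_preimage_singleton {R M ι κ : Type*} [Ring R] [AddCommGroup M]
    [Module R M] [DecidableEq ι] [DecidableEq κ] {A : ι → Submodule R M} (hA : IsInternal A)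
    (π : ι → κ) : IsInternal fun k => ⨆ i ∈ π ⁻¹' {k}, A i := by
  rw [isInternal_submodule_iff_iSupIndep_and_iSup_eq_top] at hA ⊢
  exact ⟨hA.1.biSup_preimage_singleton π, (iSup_biSup_preimage_singleton A π).trans hA.2⟩

namespace AddSubgroup

variable {G H M : Type*} [AddCommGroup G] [AddCommGroup H] [AddCommGroup M]

theorem coarsen_le_iff {ψ : G →+ H} {ℳ : G → AddSubgroup M} {h : H} {S : AddSubgroup M} :
    coarsen ψ ℳ h ≤ S ↔ ∀ g, ψ g = h → ℳ g ≤ S := by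
  simp [coarsen]

theorem le_coarsen (ψ : G →+ H) (ℳ : G → AddSubgroup M) (g : G) : ℳ g ≤ coarsen ψ ℳ (ψ g) :=
  le_biSup ℳ rfl

theorem toIntSubmodule_coarsen (ψ : G →+ H) (ℳ : G → AddSubgroup M) (h : H) :
    (coarsen ψ ℳ h).toIntSubmodule = ⨆ g ∈ ψ ⁻¹' {h}, (ℳ g).toIntSubmodule :=
  map_iSup₂ toIntSubmodule _

theorem isInternal_coarsen [DecidableEq G] [DecidableEq H] (ψ : G →+ H)
    {ℳ : G → AddSubgroup M} (hℳ : DirectSum.IsInternal ℳ) :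
    DirectSum.IsInternal (coarsen ψ ℳ) := by
  -- `IsInternal` of a family of additive subgroups unfolds to that of the `ℤ`-submodules.
  show DirectSum.IsInternal fun h => (coarsen ψ ℳ h).toIntSubmodule
  simpa only [toIntSubmodule_coarsen] using
    DirectSum.IsInternal.biSup_preimage_singleton (A := fun g => (ℳ g).toIntSubmodule) hℳ ψ

theorem smul_mem_coarsen {R : Type*} [Ring R] [Module R M] {ψ : G →+ H}
    {𝒜 : G → AddSubgroup R} {ℳ : G → AddSubgroup M}
    (hsmul : ∀ g g' : G, ∀ r ∈ 𝒜 g, ∀ m ∈ ℳ g', r • m ∈ ℳ (g + g')) {h h' : H} {r : R}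
    (hr : r ∈ coarsen ψ 𝒜 h) {m : M} (hm : m ∈ coarsen ψ ℳ h') :
    r • m ∈ coarsen ψ ℳ (h + h') := by
  suffices coarsen ψ 𝒜 h ≤ (coarsen ψ ℳ (h + h')).comap ((smulAddHom R M).flip m) from this hr
  refine coarsen_le_iff.2 fun g hg r hr => ?_
  suffices coarsen ψ ℳ h' ≤ (coarsen ψ ℳ (h + h')).comap (smulAddHom R M r) from this hm
  refine coarsen_le_iff.2 fun g' hg' m hm => ?_
  have := le_coarsen ψ ℳ (g + g') (hsmul g g' r hr m hm)
  rwa [map_add, hg, hg'] at this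

end AddSubgroup

theorem coarsening_of_gradedModule_general {G H R M : Type*} [AddCommGroup G] [AddCommGroup H]
    [DecidableEq G] [DecidableEq H] [CommRing R] [AddCommGroup M] [Module R M]
    (ψ : G →+ H)
    (𝒜 : G → AddSubgroup R)
    (ℳ : G → AddSubgroup M)
    (hM : DirectSum.IsInternal ℳ)
    (hMsmul : ∀ g g' : G, ∀ r ∈ 𝒜 g, ∀ m ∈ ℳ g', r • m ∈ ℳ (g + g')) :
    DirectSum.IsInternal (AddSubgroup.coarsen ψ ℳ) ∧
    (∀ h h' : H, ∀ r ∈ AddSubgroup.coarsen ψ 𝒜 h, ∀ m ∈ AddSubgroup.coarsen ψ ℳ h',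
      r • m ∈ AddSubgroup.coarsen ψ ℳ (h + h')) :=
  ⟨AddSubgroup.isInternal_coarsen ψ hM,
    fun _ _ _ hr _ hm => AddSubgroup.smul_mem_coarsen hMsmul hr hm⟩

/-- The `ψ`-coarsening of a `G`-graded module structure on an `R`-module `M` is an
`H`-graded module structure over the `ψ`-coarsened ring grading: `M` is the internal
direct sum of the coarsened components, and they are compatible with the multiplication
by the coarsened components of `R`. -/
theorem coarsening_of_gradedModule {G H R M : Type*} [AddCommGroup G] [AddCommGroup H]
    [DecidableEq G] [DecidableEq H] [CommRing R] [AddCommGroup M] [Module R M]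
    (ψ : G →+ H) (hψ : Function.Surjective ψ)
    (𝒜 : G → AddSubgroup R) [GradedRing 𝒜]
    (ℳ : G → AddSubgroup M)
    (hM : DirectSum.IsInternal ℳ)
    (hMsmul : ∀ g g' : G, ∀ r ∈ 𝒜 g, ∀ m ∈ ℳ g', r • m ∈ ℳ (g + g')) :
    DirectSum.IsInternal (AddSubgroup.coarsen ψ ℳ) ∧
    (∀ h h' : H, ∀ r ∈ AddSubgroup.coarsen ψ 𝒜 h, ∀ m ∈ AddSubgroup.coarsen ψ ℳ h',
      r • m ∈ AddSubgroup.coarsen ψ ℳ (h + h')) :=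
  coarsening_of_gradedModule_general ψ 𝒜 ℳ hM hMsmul
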